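/- Continuous exponential mechanism is ε-DP: The mechanism that, given X ∈ (a,b)^n and q ∈ [0,1], samples v ∈ (a,b) with density proportional to exp(ε·u(X,v)/2) where u(X,w) = −| |{x ∈ X : x < w}| − ⌊q·n⌋ |, is ε-differentially private with respect to adding or removing one data point. -/

import Mathlib

/-!
Adding or removing one data point changes the count `|{x ∈ X : x < w}|` by at most one and the
target rank `⌊q·|X|⌋` by at most one in the same direction, so the utility moves by at most 1.
Hence the unnormalized densities `exp (ε·u/2)` of neighbouring datasets agree up to a factor
`exp (ε/2)` pointwise, so do their integrals, and the two factors combine to `exp ε`.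
-/

open MeasureTheory Real

/-- Datasets are finite sets of reals; neighbors differ by adding or removing one point. -/
def FNeighbor (X X' : Finset ℝ) : Prop :=
  (∃ x ∉ X, X' = insert x X) ∨ (∃ x ∉ X', X = insert x X')

/-- The single-quantile utility function `u(X, w) = −| |{x ∈ X : x < w}| − ⌊q·|X|⌋ |`. -/
noncomputable def quantileUtility (q : ℝ) (X : Finset ℝ) (w : ℝ) : ℝ :=
  -|((X.filter (fun x => x < w)).card : ℝ) - (⌊q * X.card⌋ : ℤ)|

/-- The continuous exponential mechanism for a single quantile: it samples `v ∈ (a,b)`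
with density proportional to `exp(ε·u(X,v)/2)`. -/
noncomputable def contExpMech (ε a b q : ℝ) (X : Finset ℝ) : Measure ℝ :=
  (volume.restrict (Set.Ioo a b)).withDensity
    (fun w => ENNReal.ofReal (Real.exp (ε * quantileUtility q X w / 2) /
      ∫ w' in Set.Ioo a b, Real.exp (ε * quantileUtility q X w' / 2)))

/-- A zero normalizing constant `F` is allowed: then `y / F = 0` by convention. -/
lemma div_le_sq_mul_div {y z F G c : ℝ} (hy : 0 ≤ y) (hz : 0 ≤ z) (hF : 0 ≤ F) (hG : 0 ≤ G)
    (hyz : y ≤ c * z) (hFG : F ≤ c * G) (hGF : G ≤ c * F) :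
    y / F ≤ c ^ 2 * (z / G) := by
  rcases hF.eq_or_lt with rfl | hF
  · rw [div_zero]
    positivity
  rcases hG.eq_or_lt with rfl | hG
  · linarith
  rw [div_le_iff₀ hF, mul_div_assoc', div_mul_eq_mul_div, le_div_iff₀ hG]
  calc y * G ≤ (c * z) * (c * F) := mul_le_mul hyz hGF hG.le (hy.trans hyz)
    _ = c ^ 2 * z * F := by ring

lemma withDensity_ofReal_div_integral_le {α : Type*} [MeasurableSpace α] {μ : Measure α}
    [SFinite μ] {f g : α → ℝ} {c : ℝ} (hf : Integrable f μ) (hg : Integrable g μ)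
    (hf₀ : ∀ x, 0 ≤ f x) (hg₀ : ∀ x, 0 ≤ g x)
    (hfg : ∀ x, f x ≤ c * g x) (hgf : ∀ x, g x ≤ c * f x) (s : Set α) :
    μ.withDensity (fun x => ENNReal.ofReal (f x / ∫ y, f y ∂μ)) s
      ≤ ENNReal.ofReal (c ^ 2) * μ.withDensity (fun x => ENNReal.ofReal (g x / ∫ y, g y ∂μ)) s := by
  have hint_fg : ∫ y, f y ∂μ ≤ c * ∫ y, g y ∂μ := by
    rw [← integral_const_mul]
    exact integral_mono hf (hg.const_mul c) hfg
  have hint_gf : ∫ y, g y ∂μ ≤ c * ∫ y, f y ∂μ := by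
    rw [← integral_const_mul]
    exact integral_mono hg (hf.const_mul c) hgf
  have hdensity : ∀ x, ENNReal.ofReal (f x / ∫ y, f y ∂μ)
      ≤ ENNReal.ofReal (c ^ 2) * ENNReal.ofReal (g x / ∫ y, g y ∂μ) := fun x => by
    rw [← ENNReal.ofReal_mul (sq_nonneg c)]
    exact ENNReal.ofReal_le_ofReal <| div_le_sq_mul_div (hf₀ x) (hg₀ x)
      (integral_nonneg hf₀) (integral_nonneg hg₀) (hfg x) hint_fg hint_gf
  rw [withDensity_apply', withDensity_apply', ← lintegral_const_mul' _ _ ENNReal.ofReal_ne_top]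
  exact lintegral_mono hdensity

lemma FNeighbor.symm {X X' : Finset ℝ} (h : FNeighbor X X') : FNeighbor X' X :=
  Or.symm h

lemma monotone_card_filter_lt (X : Finset ℝ) :
    Monotone (fun w => ((X.filter (fun x => x < w)).card : ℝ)) := fun _ _ hww' => by
  dsimp only
  exact_mod_cast Finset.card_le_card <|
    Finset.monotone_filter_right X fun _ _ (hx : _ < _) => hx.trans_le hww'

lemma measurable_quantileUtility (q : ℝ) (X : Finset ℝ) : Measurable (quantileUtility q X) :=
  (((monotone_card_filter_lt X).measurable.sub measurable_const).abs).neg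

lemma card_filter_lt_insert {X : Finset ℝ} {x : ℝ} (hx : x ∉ X) (w : ℝ) :
    (((insert x X).filter (fun y => y < w)).card : ℝ)
      = (X.filter (fun y => y < w)).card + if x < w then 1 else 0 := by
  rw [Finset.filter_insert]
  split_ifs
  · rw [Finset.card_insert_of_notMem fun hmem => hx (Finset.mem_filter.mp hmem).1]
    push_cast
    ring
  · simp

lemma floor_le_floor_add_le_floor_add_one {x d : ℝ} (hd : d ∈ Set.Icc (0 : ℝ) 1) :
    ⌊x⌋ ≤ ⌊x + d⌋ ∧ ⌊x + d⌋ ≤ ⌊x⌋ + 1 := by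
  refine ⟨Int.floor_le_floor (by linarith [hd.1]), ?_⟩
  rw [← Int.floor_add_one]
  exact Int.floor_le_floor (by linarith [hd.2])

lemma abs_quantileUtility_insert_sub_le {q : ℝ} (hq : q ∈ Set.Icc (0 : ℝ) 1) {X : Finset ℝ}
    {x : ℝ} (hx : x ∉ X) (w : ℝ) :
    |quantileUtility q (insert x X) w - quantileUtility q X w| ≤ 1 := by
  have hrank : q * ((insert x X).card : ℝ) = q * X.card + q := by
    rw [Finset.card_insert_of_notMem hx]
    push_cast
    ring
  obtain ⟨hlow, hhigh⟩ := floor_le_floor_add_le_floor_add_one (x := q * X.card) hq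
  rw [← hrank] at hlow hhigh
  have hlow' : ((⌊q * X.card⌋ : ℤ) : ℝ) ≤ ⌊q * ((insert x X).card : ℝ)⌋ := by exact_mod_cast hlow
  have hhigh' : ((⌊q * ((insert x X).card : ℝ)⌋ : ℤ) : ℝ) ≤ ⌊q * X.card⌋ + 1 := by
    exact_mod_cast hhigh
  unfold quantileUtility
  rw [neg_sub_neg, abs_sub_comm]
  refine (abs_abs_sub_abs_le_abs_sub _ _).trans (abs_le.mpr ?_)
  rw [card_filter_lt_insert hx]
  split_ifs <;> constructor <;> linarith

lemma FNeighbor.abs_quantileUtility_sub_le {q : ℝ} (hq : q ∈ Set.Icc (0 : ℝ) 1)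
    {X X' : Finset ℝ} (hN : FNeighbor X X') (w : ℝ) :
    |quantileUtility q X w - quantileUtility q X' w| ≤ 1 := by
  rcases hN with ⟨x, hx, rfl⟩ | ⟨x, hx, rfl⟩
  · rw [abs_sub_comm]
    exact abs_quantileUtility_insert_sub_le hq hx w
  · exact abs_quantileUtility_insert_sub_le hq hx w

lemma FNeighbor.exp_quantileUtility_le {ε q : ℝ} (hε : 0 ≤ ε) (hq : q ∈ Set.Icc (0 : ℝ) 1)
    {X X' : Finset ℝ} (hN : FNeighbor X X') (w : ℝ) :
    exp (ε * quantileUtility q X w / 2) ≤ exp (ε / 2) * exp (ε * quantileUtility q X' w / 2) := by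
  rw [← exp_add, exp_le_exp]
  have hsens := (abs_le.mp (hN.abs_quantileUtility_sub_le hq w)).2
  nlinarith

lemma integrableOn_exp_quantileUtility {ε : ℝ} (hε : 0 ≤ ε) (a b q : ℝ) (X : Finset ℝ) :
    IntegrableOn (fun w => exp (ε * quantileUtility q X w / 2)) (Set.Ioo a b) := by
  refine Measure.integrableOn_of_bounded (M := 1) measure_Ioo_lt_top.ne
    (measurable_exp.comp
      ((measurable_quantileUtility q X).const_mul ε |>.div_const 2)).aestronglyMeasurable ?_
  refine Filter.Eventually.of_forall fun w => ?_
  rw [norm_of_nonneg (exp_pos _).le, exp_le_one_iff]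
  exact div_nonpos_of_nonpos_of_nonneg
    (mul_nonpos_of_nonneg_of_nonpos hε (neg_nonpos.mpr (abs_nonneg _))) zero_le_two

theorem contExpMech_isDP_general (ε a b q : ℝ) (hε : 0 < ε)
    (hq : q ∈ Set.Icc (0 : ℝ) 1)
    (X X' : Finset ℝ) (hN : FNeighbor X X')
    (S : Set ℝ) :
    contExpMech ε a b q X S ≤ ENNReal.ofReal (Real.exp ε) * contExpMech ε a b q X' S := by
  have hexp : exp ε = exp (ε / 2) ^ 2 := by rw [← exp_nat_mul]; ring_nf
  rw [hexp]
  exact withDensity_ofReal_div_integral_le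
    (f := fun w => exp (ε * quantileUtility q X w / 2))
    (g := fun w => exp (ε * quantileUtility q X' w / 2))
    (integrableOn_exp_quantileUtility hε.le a b q X)
    (integrableOn_exp_quantileUtility hε.le a b q X')
    (fun _ => (exp_pos _).le) (fun _ => (exp_pos _).le)
    (hN.exp_quantileUtility_le hε.le hq) (hN.symm.exp_quantileUtility_le hε.le hq) S

/-- The continuous exponential mechanism for a single quantile is `ε`-differentially
private with respect to adding or removing one data point. -/
theorem contExpMech_isDP (ε a b q : ℝ) (hε : 0 < ε) (hab : a < b)
    (hq : q ∈ Set.Icc (0 : ℝ) 1)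
    (X X' : Finset ℝ) (hN : FNeighbor X X')
    (hX : ∀ x ∈ X, x ∈ Set.Ioo a b) (hX' : ∀ x ∈ X', x ∈ Set.Ioo a b)
    (S : Set ℝ) (hS : MeasurableSet S) :
    contExpMech ε a b q X S ≤ ENNReal.ofReal (Real.exp ε) * contExpMech ε a b q X' S :=
  contExpMech_isDP_general ε a b q hε hq X X' hN S
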